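/- For z = (τ+1)/2 the identity e(y)·θ(y+z,τ)·κ(y, z−x;τ) − e(−x)·θ(x−z,τ)·κ(−x, y+z;τ) = θ(z,τ)·f(x,y;τ) degenerates: since θ((τ+1)/2, τ) = 0, one obtains e(y)·θ(y+(τ+1)/2, τ)·κ(y, (τ+1)/2 − x; τ) = e(−x)·θ(x−(τ+1)/2, τ)·κ(−x, y+(τ+1)/2; τ) for all x, y in the domain of convergence. -/

import Mathlib

open Complex

noncomputable def e (w : ℂ) : ℂ := Complex.exp (2 * Real.pi * Complex.I * w)

noncomputable def theta (z τ : ℂ) : ℂ := ∑' n : ℤ, e (τ * n ^ 2 / 2 + n * z)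

noncomputable def thetaD (z τ : ℂ) : ℂ := deriv (fun w => theta w τ) z

noncomputable def al (τ z : ℂ) : ℝ := z.im / τ.im

noncomputable def sgn (t : ℝ) : ℂ := if 0 < t then 1 else -1

/-- term of the Kronecker-Eisenstein series, indexed by `(m, n) : ℤ × ℤ`. -/
noncomputable def fterm (τ z₁ z₂ : ℂ) (p : ℤ × ℤ) : ℂ :=
  if 0 < (al τ z₁ + p.1) * (al τ z₂ + p.2) then
    sgn (al τ z₁ + p.1) * e (τ * p.1 * p.2 + p.2 * z₁ + p.1 * z₂)
  else 0

noncomputable def fKr (z₁ z₂ τ : ℂ) : ℂ := ∑' p : ℤ × ℤ, fterm τ z₁ z₂ p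

noncomputable def kappa (y x τ : ℂ) : ℂ :=
  ∑' n : ℤ, e (τ * n ^ 2 / 2 + n * x) / (e (n * τ) - e y)

/-- term of the trapezoid series `g`, indexed by `(m, n) : ℤ × ℤ`. -/
noncomputable def gterm (τ z₁ z₂ : ℂ) (p : ℤ × ℤ) : ℂ :=
  if 0 < ((p.2 : ℝ) + al τ z₁) * ((p.1 : ℝ) + al τ z₂) then
    sgn ((p.1 : ℝ) + al τ z₂) *
      e (((p.2 : ℂ) + p.1 / 2) * p.1 * τ + p.1 * z₁ + ((p.1 : ℂ) + p.2) * z₂)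
  else 0

noncomputable def gF (z₁ z₂ τ : ℂ) : ℂ := ∑' p : ℤ × ℤ, gterm τ z₁ z₂ p

noncomputable def g0 (z₁ z₂ τ : ℂ) : ℂ :=
  ∑' m : ℤ, e (τ * m ^ 2 / 2 + m * (z₁ + z₂)) / (1 - e (m * τ + z₂))

/-- term of the series `h₀`, indexed by `(m, n) : ℤ × ℤ`. -/
noncomputable def hterm (τ x : ℂ) (p : ℤ × ℤ) : ℂ :=
  if 0 < ((p.1 : ℝ) + 1 / 2) * ((p.2 : ℝ) + 1 / 2) then
    sgn ((p.1 : ℝ) + 1 / 2) *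
      e (τ / 2 * (2 * p.1 ^ 2 + 4 * p.1 * p.2 + p.2 ^ 2) + p.2 * x)
  else 0

noncomputable def h0 (τ x : ℂ) : ℂ := ∑' p : ℤ × ℤ, hterm τ x p

def notInt (t : ℝ) : Prop := ∀ k : ℤ, t ≠ (k : ℝ)

lemma e_add (a b : ℂ) : e (a + b) = e a * e b := by
  rw [e, e, e, ← Complex.exp_add]; ring_nf

lemma e_ne_zero (a : ℂ) : e a ≠ 0 := Complex.exp_ne_zero _

lemma norm_e (w : ℂ) : ‖e w‖ = Real.exp (-(2 * Real.pi * w.im)) := by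
  rw [e, Complex.norm_exp]
  congr 1
  have : (2 * (Real.pi:ℂ) * I * w) = (((2 * Real.pi : ℝ)) : ℂ) * w * I := by
    push_cast; ring
  rw [this, mul_I_re, im_ofReal_mul]

lemma e_nat_mul (j : ℕ) (w : ℂ) : e ((j : ℂ) * w) = e w ^ j := by
  rw [e, e, ← Complex.exp_nat_mul]; ring_nf

lemma theta_term_eq (τ z : ℂ) (n : ℤ) :
    e (τ * n ^ 2 / 2 + n * z) = jacobiTheta₂_term n z τ := by
  rw [jacobiTheta₂_term, e]; congr 1; push_cast; ring

lemma theta_eq (z τ : ℂ) : theta z τ = jacobiTheta₂ z τ :=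
  tsum_congr fun n => theta_term_eq τ z n

lemma theta_half_zero {τ : ℂ} (_hτ : 0 < τ.im) : theta ((τ + 1) / 2) τ = 0 := by
  have h1 : jacobiTheta₂ ((τ + 1) / 2) τ = jacobiTheta₂ (-((τ + 1) / 2)) τ :=
    (jacobiTheta₂_neg_left _ _).symm
  have h2 : jacobiTheta₂ ((-((τ + 1) / 2) + 1) + τ) τ
      = cexp (-Real.pi * I * (τ + 2 * (-((τ + 1) / 2) + 1))) *
        jacobiTheta₂ (-((τ + 1) / 2) + 1) τ := jacobiTheta₂_add_left' _ _
  have h3 : (-((τ + 1) / 2) + 1) + τ = (τ + 1) / 2 := by ring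
  have h4 : jacobiTheta₂ (-((τ + 1) / 2) + 1) τ = jacobiTheta₂ (-((τ + 1) / 2)) τ :=
    jacobiTheta₂_add_left _ _
  have h5 : (τ + 2 * (-((τ + 1) / 2) + 1)) = 1 := by ring
  rw [h3, h4, h5] at h2
  have h6 : cexp (-Real.pi * I * 1) = -1 := by
    rw [mul_one, show (-Real.pi * I : ℂ) = -(Real.pi * I) by ring, Complex.exp_neg,
      Complex.exp_pi_mul_I]
    norm_num
  rw [theta_eq]
  rw [h6, ← h1, neg_one_mul] at h2
  linear_combination h2 / 2

lemma summable_exp_quad {c : ℝ} (hc : 0 < c) (B : ℝ) :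
    Summable (fun n : ℤ => Real.exp (-Real.pi * c * n ^ 2 + B * |(n:ℝ)|)) := by
  have := summable_pow_mul_jacobiTheta₂_term_bound (B / (2 * Real.pi)) hc 0
  refine this.congr fun n => ?_
  rw [pow_zero, one_mul]
  congr 1
  have hπ : (Real.pi : ℝ) ≠ 0 := Real.pi_ne_zero
  push_cast
  field_simp
  ring

lemma summable_exp_quad' {c : ℝ} (hc : 0 < c) (b B : ℝ) :
    Summable (fun n : ℤ => Real.exp (-Real.pi * c * n ^ 2 + b * n + B * |(n:ℝ)|)) := by
  refine (summable_exp_quad hc (|b| + |B|)).of_nonneg_of_le (fun n => (Real.exp_pos _).le)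
    (fun n => Real.exp_le_exp.2 ?_)
  have h1 : b * n ≤ |b| * |(n:ℝ)| := by
    calc b * n ≤ |b * n| := le_abs_self _
    _ = |b| * |(n:ℝ)| := abs_mul _ _
  have h2 : B * |(n:ℝ)| ≤ |B| * |(n:ℝ)| :=
    mul_le_mul_of_nonneg_right (le_abs_self _) (abs_nonneg _)
  nlinarith [abs_nonneg (n:ℝ)]

lemma e_neg (w : ℂ) : e (-w) = (e w)⁻¹ := by
  rw [e, e, ← Complex.exp_neg]; ring_nf

lemma im_int_mul (n : ℤ) (w : ℂ) : ((n:ℂ) * w).im = n * w.im := by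
  simp [Complex.mul_im]

lemma hasSum_inv_denom_lt {τ y : ℂ} {n : ℤ} (hn : (n:ℝ) * τ.im < y.im) :
    HasSum (fun j : ℕ => e ((j:ℂ) * y - ((j:ℂ) + 1) * ((n:ℂ) * τ)))
      ((e ((n:ℂ) * τ) - e y)⁻¹) := by
  have hnorm : ‖e (y - (n:ℂ) * τ)‖ < 1 := by
    rw [norm_e, Real.exp_lt_one_iff]
    have : (y - (n:ℂ) * τ).im = y.im - n * τ.im := by rw [sub_im, im_int_mul]
    rw [this]; nlinarith [Real.pi_pos]
  have hne : (1 : ℂ) - e (y - (n:ℂ) * τ) ≠ 0 := by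
    intro h
    have : ‖e (y - (n:ℂ) * τ)‖ = 1 := by
      rw [show e (y - (n:ℂ)*τ) = 1 by linear_combination -h]; simp
    linarith
  have hgeo := (hasSum_geometric_of_norm_lt_one hnorm).mul_left (e (-((n:ℂ) * τ)))
  have hval : e (-((n:ℂ) * τ)) * (1 - e (y - (n:ℂ) * τ))⁻¹ = (e ((n:ℂ) * τ) - e y)⁻¹ := by
    have key : e ((n:ℂ) * τ) - e y = e ((n:ℂ) * τ) * (1 - e (y - (n:ℂ) * τ)) := by
      rw [mul_sub, mul_one, ← e_add]
      congr 2
      ring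
    rw [key, mul_inv, e_neg]
  rw [hval] at hgeo
  refine hgeo.congr_fun fun j => ?_
  rw [← e_nat_mul, ← e_add]
  congr 1
  ring

lemma hasSum_inv_denom_gt {τ y : ℂ} {n : ℤ} (hn : y.im < (n:ℝ) * τ.im) :
    HasSum (fun j : ℕ => -e (-((j:ℂ) + 1) * y + (j:ℂ) * ((n:ℂ) * τ)))
      ((e ((n:ℂ) * τ) - e y)⁻¹) := by
  have hnorm : ‖e ((n:ℂ) * τ - y)‖ < 1 := by
    rw [norm_e, Real.exp_lt_one_iff]
    have : ((n:ℂ) * τ - y).im = n * τ.im - y.im := by rw [sub_im, im_int_mul]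
    rw [this]; nlinarith [Real.pi_pos]
  have hne : (1 : ℂ) - e ((n:ℂ) * τ - y) ≠ 0 := by
    intro h
    have : ‖e ((n:ℂ) * τ - y)‖ = 1 := by
      rw [show e ((n:ℂ)*τ - y) = 1 by linear_combination -h]; simp
    linarith
  have hgeo := (hasSum_geometric_of_norm_lt_one hnorm).mul_left (-e (-y))
  have hval : -e (-y) * (1 - e ((n:ℂ) * τ - y))⁻¹ = (e ((n:ℂ) * τ) - e y)⁻¹ := by
    have key : e ((n:ℂ) * τ) - e y = (-e y) * (1 - e ((n:ℂ) * τ - y)) := by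
      have h := e_add y ((n:ℂ) * τ - y)
      rw [show y + ((n:ℂ) * τ - y) = (n:ℂ) * τ by ring] at h
      rw [mul_sub, mul_one]
      linear_combination h
    rw [key, mul_inv, e_neg, inv_neg]
  rw [hval] at hgeo
  refine hgeo.congr_fun fun j => ?_
  have h2 : e (-((j:ℂ) + 1) * y + (j:ℂ) * ((n:ℂ) * τ)) = e (-y) * e ((n:ℂ) * τ - y) ^ j := by
    rw [← e_nat_mul, ← e_add]
    congr 1
    ring
  rw [h2]
  ring

/-- The generic triple-indexed series: theta index `q.1`, kappa index `q.2.1`,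
geometric index `q.2.2`. -/
noncomputable def GT (τ c w₁ w₂ u : ℂ) (q : ℤ × ℤ × ℕ) : ℂ :=
  (c * e (τ * (q.1 : ℂ) ^ 2 / 2 + (q.1 : ℂ) * w₁)) *
  (e (τ * (q.2.1 : ℂ) ^ 2 / 2 + (q.2.1 : ℂ) * w₂) *
    (if q.2.1 ≤ ⌊al τ u⌋ then e ((q.2.2 : ℂ) * u - ((q.2.2 : ℂ) + 1) * ((q.2.1 : ℂ) * τ))
     else -e (-((q.2.2 : ℂ) + 1) * u + (q.2.2 : ℂ) * ((q.2.1 : ℂ) * τ))))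

lemma im_theta_arg (τ w : ℂ) (m : ℤ) :
    (τ * (m : ℂ) ^ 2 / 2 + (m : ℂ) * w).im = τ.im * m ^ 2 / 2 + m * w.im := by
  have h : τ * (m : ℂ) ^ 2 / 2 + (m : ℂ) * w
      = (((m : ℝ) ^ 2 / 2 : ℝ) : ℂ) * τ + (((m : ℝ)) : ℂ) * w := by push_cast; ring
  rw [h, add_im, im_ofReal_mul, im_ofReal_mul]
  push_cast; ring

lemma norm_theta_term_le (τ w : ℂ) (m : ℤ) :
    ‖e (τ * (m : ℂ) ^ 2 / 2 + (m : ℂ) * w)‖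
      ≤ Real.exp (-Real.pi * τ.im * m ^ 2 + 2 * Real.pi * |w.im| * |(m : ℝ)|) := by
  rw [norm_e, im_theta_arg, Real.exp_le_exp]
  have h : -((m : ℝ) * w.im) ≤ |w.im| * |(m : ℝ)| := by
    calc -((m : ℝ) * w.im) ≤ |(m : ℝ) * w.im| := neg_le_abs _
    _ = |(m : ℝ)| * |w.im| := abs_mul _ _
    _ = |w.im| * |(m : ℝ)| := mul_comm _ _
  nlinarith [Real.pi_pos]

noncomputable def rho (τ u : ℂ) : ℝ :=
  max (Real.exp (-(2 * Real.pi) * (u.im - ⌊al τ u⌋ * τ.im)))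
    (Real.exp (-(2 * Real.pi) * ((⌊al τ u⌋ + 1) * τ.im - u.im)))

lemma rho_nonneg (τ u : ℂ) : 0 ≤ rho τ u :=
  le_max_of_le_left (Real.exp_pos _).le

lemma u_im_eq {τ u : ℂ} (hτ : 0 < τ.im) : u.im = al τ u * τ.im := by
  rw [al]; field_simp

lemma floor_lt_al {τ u : ℂ} (hu : notInt (al τ u)) : (⌊al τ u⌋ : ℝ) < al τ u :=
  lt_of_le_of_ne (Int.floor_le _) (Ne.symm (hu _))

lemma rho_lt_one {τ u : ℂ} (hτ : 0 < τ.im) (hu : notInt (al τ u)) : rho τ u < 1 := by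
  have h1 := floor_lt_al hu
  have h2 : al τ u < (⌊al τ u⌋ : ℝ) + 1 := Int.lt_floor_add_one _
  have hui := u_im_eq (u := u) hτ
  have hπ := Real.pi_pos
  apply max_lt <;> rw [Real.exp_lt_one_iff] <;>
    nlinarith [mul_pos (sub_pos.2 h1) hτ, mul_pos (sub_pos.2 h2) hτ,
      mul_pos hπ (mul_pos (sub_pos.2 h1) hτ), mul_pos hπ (mul_pos (sub_pos.2 h2) hτ)]

lemma im_comb (r s : ℝ) (uu vv : ℂ) :
    (((r : ℂ)) * uu + ((s : ℂ)) * vv).im = r * uu.im + s * vv.im := by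
  simp [add_im, im_ofReal_mul]

lemma branch_norm_le {τ u : ℂ} (hτ : 0 < τ.im) (hu : notInt (al τ u)) (n : ℤ) (j : ℕ) :
    ‖(if n ≤ ⌊al τ u⌋ then e ((j : ℂ) * u - ((j : ℂ) + 1) * ((n : ℂ) * τ))
      else -e (-((j : ℂ) + 1) * u + (j : ℂ) * ((n : ℂ) * τ)))‖
    ≤ Real.exp (2 * Real.pi * τ.im * |(n : ℝ)|) * Real.exp (2 * Real.pi * |u.im|)
        * rho τ u ^ j := by
  have hπ := Real.pi_pos
  have hui := u_im_eq (u := u) hτ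
  have h1 := floor_lt_al hu
  have h2 : al τ u < (⌊al τ u⌋ : ℝ) + 1 := Int.lt_floor_add_one _
  split_ifs with h
  · have harg : (j : ℂ) * u - ((j : ℂ) + 1) * ((n : ℂ) * τ)
        = (((j : ℝ)) : ℂ) * u + ((-(((j : ℝ) + 1) * (n : ℝ)) : ℝ) : ℂ) * τ := by
      push_cast; ring
    rw [harg, norm_e, im_comb]
    have key : Real.exp (-(2 * Real.pi * ((j:ℝ) * u.im + -(((j:ℝ) + 1) * (n:ℝ)) * τ.im)))
        = Real.exp (2 * Real.pi * ((n:ℝ) * τ.im))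
          * Real.exp (-(2 * Real.pi) * (u.im - (n:ℝ) * τ.im)) ^ j := by
      rw [← Real.exp_nat_mul, ← Real.exp_add]
      congr 1; ring
    rw [key]
    have hb1 : Real.exp (-(2 * Real.pi) * (u.im - (n:ℝ) * τ.im)) ≤ rho τ u := by
      refine le_trans (Real.exp_le_exp.2 ?_) (le_max_left _ _)
      have h5 : (n : ℝ) ≤ (⌊al τ u⌋ : ℝ) := by exact_mod_cast h
      nlinarith [mul_le_mul_of_nonneg_right h5 hτ.le,
        mul_le_mul_of_nonneg_left (mul_le_mul_of_nonneg_right h5 hτ.le) Real.two_pi_pos.le]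
    have hb2 : Real.exp (2 * Real.pi * ((n:ℝ) * τ.im))
        ≤ Real.exp (2 * Real.pi * τ.im * |(n:ℝ)|) * Real.exp (2 * Real.pi * |u.im|) := by
      rw [← Real.exp_add]
      refine Real.exp_le_exp.2 ?_
      have : (n : ℝ) * τ.im ≤ |(n:ℝ)| * τ.im :=
        mul_le_mul_of_nonneg_right (le_abs_self _) hτ.le
      have h0 : (0:ℝ) ≤ 2 * Real.pi * |u.im| := by positivity
      nlinarith
    exact mul_le_mul hb2 (pow_le_pow_left₀ (Real.exp_pos _).le hb1 j) (by positivity)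
      (by positivity)
  · rw [norm_neg]
    have harg : -((j : ℂ) + 1) * u + (j : ℂ) * ((n : ℂ) * τ)
        = ((-((j : ℝ) + 1) : ℝ) : ℂ) * u + (((j : ℝ) * (n : ℝ) : ℝ) : ℂ) * τ := by
      push_cast; ring
    rw [harg, norm_e, im_comb]
    have key : Real.exp (-(2 * Real.pi * (-((j:ℝ) + 1) * u.im + (j:ℝ) * (n:ℝ) * τ.im)))
        = Real.exp (2 * Real.pi * u.im)
          * Real.exp (-(2 * Real.pi) * ((n:ℝ) * τ.im - u.im)) ^ j := by
      rw [← Real.exp_nat_mul, ← Real.exp_add]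
      congr 1; ring
    rw [key]
    have hb1 : Real.exp (-(2 * Real.pi) * ((n:ℝ) * τ.im - u.im)) ≤ rho τ u := by
      refine le_trans (Real.exp_le_exp.2 ?_) (le_max_right _ _)
      have h5 : (⌊al τ u⌋ : ℝ) + 1 ≤ (n : ℝ) := by
        have : ⌊al τ u⌋ + 1 ≤ n := by omega
        exact_mod_cast this
      nlinarith [mul_le_mul_of_nonneg_right h5 hτ.le,
        mul_le_mul_of_nonneg_left (mul_le_mul_of_nonneg_right h5 hτ.le) Real.two_pi_pos.le]
    have hb2 : Real.exp (2 * Real.pi * u.im)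
        ≤ Real.exp (2 * Real.pi * τ.im * |(n:ℝ)|) * Real.exp (2 * Real.pi * |u.im|) := by
      rw [← Real.exp_add]
      refine Real.exp_le_exp.2 ?_
      have h3 : u.im ≤ |u.im| := le_abs_self _
      have h0 : (0:ℝ) ≤ 2 * Real.pi * (τ.im * |(n:ℝ)|) := by positivity
      nlinarith
    exact mul_le_mul hb2 (pow_le_pow_left₀ (Real.exp_pos _).le hb1 j) (by positivity)
      (by positivity)

lemma exp_shuffle (A B C : ℝ) (r : ℝ) (j : ℕ) :
    Real.exp A * (Real.exp B * Real.exp C * r ^ j)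
      = Real.exp C * Real.exp (A + B) * r ^ j := by
  rw [Real.exp_add]; ring

lemma summable_GT_norm {τ u : ℂ} (hτ : 0 < τ.im) (hu : notInt (al τ u)) (c w₁ w₂ : ℂ) :
    Summable (fun q : ℤ × ℤ × ℕ => ‖GT τ c w₁ w₂ u q‖) := by
  have hρ0 := rho_nonneg τ u
  have hρ1 := rho_lt_one hτ hu
  have hF : Summable (fun m : ℤ =>
      ‖c‖ * Real.exp (-Real.pi * τ.im * m ^ 2 + 2 * Real.pi * |w₁.im| * |(m:ℝ)|)) :=
    (summable_exp_quad hτ _).mul_left _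
  have hG2 : Summable (fun n : ℤ => Real.exp (2 * Real.pi * |u.im|) *
      Real.exp ((-Real.pi * τ.im * n ^ 2 + 2 * Real.pi * |w₂.im| * |(n:ℝ)|)
        + 2 * Real.pi * τ.im * |(n:ℝ)|)) := by
    refine ((summable_exp_quad hτ (2 * Real.pi * |w₂.im| + 2 * Real.pi * τ.im)).mul_left
      (Real.exp (2 * Real.pi * |u.im|))).congr fun n => ?_
    congr 2
    ring
  have hG3 : Summable (fun j : ℕ => rho τ u ^ j) := summable_geometric_of_lt_one hρ0 hρ1
  have hG : Summable (fun p : ℤ × ℕ => (Real.exp (2 * Real.pi * |u.im|) *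
      Real.exp ((-Real.pi * τ.im * p.1 ^ 2 + 2 * Real.pi * |w₂.im| * |(p.1:ℝ)|)
        + 2 * Real.pi * τ.im * |(p.1:ℝ)|)) * rho τ u ^ p.2) :=
    hG2.mul_of_nonneg hG3 (fun n => by positivity) (fun j => by positivity)
  have htot : Summable (fun q : ℤ × ℤ × ℕ =>
      (‖c‖ * Real.exp (-Real.pi * τ.im * q.1 ^ 2 + 2 * Real.pi * |w₁.im| * |(q.1:ℝ)|)) *
      ((Real.exp (2 * Real.pi * |u.im|) *
        Real.exp ((-Real.pi * τ.im * q.2.1 ^ 2 + 2 * Real.pi * |w₂.im| * |(q.2.1:ℝ)|)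
          + 2 * Real.pi * τ.im * |(q.2.1:ℝ)|)) * rho τ u ^ q.2.2)) :=
    hF.mul_of_nonneg hG (fun m => by positivity) (fun p => by positivity)
  refine htot.of_nonneg_of_le (fun q => norm_nonneg _) fun q => ?_
  obtain ⟨m, n, j⟩ := q
  rw [GT, norm_mul, norm_mul, norm_mul]
  refine mul_le_mul ?_ ?_ (by positivity) (by positivity)
  · exact mul_le_mul_of_nonneg_left (norm_theta_term_le τ w₁ m) (norm_nonneg c)
  · rw [← exp_shuffle]
    refine mul_le_mul (norm_theta_term_le τ w₂ n) (branch_norm_le hτ hu n j)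
      (norm_nonneg _) (Real.exp_pos _).le

lemma summable_theta_term {τ : ℂ} (hτ : 0 < τ.im) (w : ℂ) :
    Summable (fun n : ℤ => e (τ * (n:ℂ) ^ 2 / 2 + (n:ℂ) * w)) := by
  refine ((summable_jacobiTheta₂_term_iff w τ).mpr hτ).congr fun n => ?_
  exact (theta_term_eq τ w n).symm

lemma GT_tsum {τ u : ℂ} (hτ : 0 < τ.im) (hu : notInt (al τ u)) (c w₁ w₂ : ℂ) :
    c * theta w₁ τ * kappa u w₂ τ = ∑' q : ℤ × ℤ × ℕ, GT τ c w₁ w₂ u q := by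
  rcases eq_or_ne c 0 with rfl | hc
  · simp [GT]
  have hsum : Summable (GT τ c w₁ w₂ u) := (summable_GT_norm hτ hu c w₁ w₂).of_norm
  set S := ∑' q : ℤ × ℤ × ℕ, GT τ c w₁ w₂ u q with hS_def
  have hS : HasSum (GT τ c w₁ w₂ u) S := hsum.hasSum
  have hS' : HasSum (GT τ c w₁ w₂ u ∘ (Equiv.prodAssoc ℤ ℤ ℕ)) S :=
    (Equiv.hasSum_iff (Equiv.prodAssoc ℤ ℤ ℕ)).2 hS
  -- fiberwise over the geometric index
  set f₁ : ℤ → ℂ := fun m => c * e (τ * (m:ℂ) ^ 2 / 2 + (m:ℂ) * w₁) with hf₁_def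
  set f₂ : ℤ → ℂ := fun n =>
    e (τ * (n:ℂ) ^ 2 / 2 + (n:ℂ) * w₂) * (e ((n:ℂ) * τ) - e u)⁻¹ with hf₂_def
  have hfib : ∀ mn : ℤ × ℤ, HasSum (fun j : ℕ =>
      (GT τ c w₁ w₂ u ∘ (Equiv.prodAssoc ℤ ℤ ℕ)) ((mn, j))) (f₁ mn.1 * f₂ mn.2) := by
    rintro ⟨m, n⟩
    have hne : (n : ℝ) ≠ al τ u := fun h => hu n h.symm
    rcases le_or_gt n ⌊al τ u⌋ with h | h
    · have hlt : (n : ℝ) * τ.im < u.im := by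
        have h1 : (n : ℝ) ≤ (⌊al τ u⌋:ℝ) := by exact_mod_cast h
        have h2 := floor_lt_al hu
        have := u_im_eq (u := u) hτ
        nlinarith
      have := ((hasSum_inv_denom_lt (τ := τ) (y := u) hlt).mul_left
        (e (τ * (n:ℂ) ^ 2 / 2 + (n:ℂ) * w₂))).mul_left (f₁ m)
      refine this.congr_fun fun j => ?_
      simp only [Function.comp_apply, Equiv.prodAssoc_apply, GT, if_pos h, hf₁_def]
    · have hgt : u.im < (n : ℝ) * τ.im := by
        have h1 : (⌊al τ u⌋:ℝ) + 1 ≤ (n : ℝ) := by exact_mod_cast h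
        have h2 : al τ u < (⌊al τ u⌋ : ℝ) + 1 := Int.lt_floor_add_one _
        have := u_im_eq (u := u) hτ
        nlinarith
      have := ((hasSum_inv_denom_gt (τ := τ) (y := u) hgt).mul_left
        (e (τ * (n:ℂ) ^ 2 / 2 + (n:ℂ) * w₂))).mul_left (f₁ m)
      refine this.congr_fun fun j => ?_
      simp only [Function.comp_apply, Equiv.prodAssoc_apply, GT, if_neg (not_le.2 h), hf₁_def]
  have hG : HasSum (fun mn : ℤ × ℤ => f₁ mn.1 * f₂ mn.2) S := hS'.prod_fiberwise hfib
  -- sum over n : kappa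
  have hf₂sum : Summable f₂ := by
    have h0 : f₁ 0 ≠ 0 := by
      simp only [hf₁_def, Int.cast_zero]
      exact mul_ne_zero hc (e_ne_zero _)
    have := hG.summable.prod_factor 0
    exact (summable_mul_left_iff h0).1 this
  have hkap : kappa u w₂ τ = ∑' n, f₂ n := by
    rw [kappa]
    exact tsum_congr fun n => div_eq_mul_inv _ _
  have hK : HasSum f₂ (kappa u w₂ τ) := hkap ▸ hf₂sum.hasSum
  have hfib2 : ∀ m : ℤ, HasSum (fun n : ℤ => f₁ m * f₂ n) (f₁ m * kappa u w₂ τ) :=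
    fun m => hK.mul_left _
  have hF : HasSum (fun m : ℤ => f₁ m * kappa u w₂ τ) S := hG.prod_fiberwise hfib2
  have htheta : HasSum f₁ (c * theta w₁ τ) := by
    rw [hf₁_def]
    exact ((summable_theta_term hτ w₁).hasSum).mul_left c
  have : HasSum (fun m : ℤ => f₁ m * kappa u w₂ τ) (c * theta w₁ τ * kappa u w₂ τ) :=
    htheta.mul_right _
  exact this.unique hF

/-- common exponent of the normal form, index `(m, n, k)`. -/
noncomputable def EE (τ x y : ℂ) (p : ℤ × ℤ × ℤ) : ℂ :=
  τ * (p.1 : ℂ) ^ 2 / 2 + τ * (p.2.1 : ℂ) ^ 2 / 2 + ((p.1 : ℂ) - (p.2.2 : ℂ)) * (p.2.1 : ℂ) * τ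
    + (p.2.2 : ℂ) * y + ((p.1 : ℂ) + (p.2.1 : ℂ)) * ((τ + 1) / 2) - (p.2.1 : ℂ) * x

noncomputable def Phi (τ x y : ℂ) (p : ℤ × ℤ × ℤ) : ℂ :=
  (if p.2.1 ≤ ⌊al τ y⌋ ∧ p.1 < p.2.2 then 1
   else if ⌊al τ y⌋ < p.2.1 ∧ p.2.2 ≤ p.1 then -1 else 0) * e (EE τ x y p)

noncomputable def Psi (τ x y : ℂ) (p : ℤ × ℤ × ℤ) : ℂ :=
  (if p.2.2 ≤ ⌊al τ (-x)⌋ ∧ p.1 < p.2.2 then 1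
   else if ⌊al τ (-x)⌋ < p.2.2 ∧ p.2.2 ≤ p.1 then -1 else 0) * e (EE τ x y p)

def iotaL (N : ℤ) (q : ℤ × ℤ × ℕ) : ℤ × ℤ × ℤ :=
  (q.1, q.2.1, if q.2.1 ≤ N then q.1 + 1 + q.2.2 else q.1 - q.2.2)

def iotaR (N : ℤ) (q : ℤ × ℤ × ℕ) : ℤ × ℤ × ℤ :=
  if q.2.1 ≤ N then (q.2.1 - q.2.2 - 1, q.2.2 + 1 - q.1, q.2.1)
  else (q.2.1 + q.2.2, -q.1 - q.2.2, q.2.1)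

lemma iotaL_inj (N : ℤ) : Function.Injective (iotaL N) := by
  rintro ⟨m, n, j⟩ ⟨m', n', j'⟩ h
  simp only [iotaL, Prod.ext_iff] at h ⊢
  obtain ⟨h1, h2, h3⟩ := h
  subst h1; subst h2
  refine ⟨rfl, rfl, ?_⟩
  split_ifs at h3 <;> omega

lemma iotaR_inj (N : ℤ) : Function.Injective (iotaR N) := by
  rintro ⟨m, n, j⟩ ⟨m', n', j'⟩ h
  simp only [iotaR] at h
  split_ifs at h with h1 h2 h2 <;> simp only [Prod.ext_iff] at h <;>
    obtain ⟨ha, hb, hc⟩ := h <;> subst hc <;> simp_all <;> omega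

lemma Phi_off_range {τ x y : ℂ} (p : ℤ × ℤ × ℤ) (hp : p ∉ Set.range (iotaL ⌊al τ y⌋)) :
    Phi τ x y p = 0 := by
  obtain ⟨m, n, k⟩ := p
  rw [Phi]
  dsimp only
  rcases le_or_gt n ⌊al τ y⌋ with h1 | h1
  · rcases lt_or_ge m k with h2 | h2
    · exact absurd ⟨(m, n, (k - m - 1).toNat), by
        simp only [iotaL]
        rw [if_pos h1, Prod.ext_iff, Prod.ext_iff]
        refine ⟨rfl, rfl, ?_⟩
        push_cast
        omega⟩ hp
    · rw [if_neg (by omega), if_neg (by omega), zero_mul]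
  · rcases le_or_gt k m with h2 | h2
    · exact absurd ⟨(m, n, (m - k).toNat), by
        simp only [iotaL]
        rw [if_neg (by omega : ¬ n ≤ ⌊al τ y⌋), Prod.ext_iff, Prod.ext_iff]
        refine ⟨rfl, rfl, ?_⟩
        push_cast
        omega⟩ hp
    · rw [if_neg (by omega), if_neg (by omega), zero_mul]

lemma Psi_off_range {τ x y : ℂ} (p : ℤ × ℤ × ℤ) (hp : p ∉ Set.range (iotaR ⌊al τ (-x)⌋)) :
    Psi τ x y p = 0 := by
  obtain ⟨m, n, k⟩ := p
  rw [Psi]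
  dsimp only
  rcases le_or_gt k ⌊al τ (-x)⌋ with h1 | h1
  · rcases lt_or_ge m k with h2 | h2
    · exact absurd ⟨(k - m - 1 + 1 - n, k, (k - m - 1).toNat), by
        rw [iotaR, if_pos h1, Prod.ext_iff, Prod.ext_iff]
        refine ⟨?_, ?_, rfl⟩ <;> push_cast <;> omega⟩ hp
    · rw [if_neg (by omega), if_neg (by omega), zero_mul]
  · rcases le_or_gt k m with h2 | h2
    · exact absurd ⟨(-(n) - (m - k), k, (m - k).toNat), by
        rw [iotaR, if_neg (by omega : ¬ k ≤ ⌊al τ (-x)⌋), Prod.ext_iff, Prod.ext_iff]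
        refine ⟨?_, ?_, rfl⟩ <;> push_cast <;> omega⟩ hp
    · rw [if_neg (by omega), if_neg (by omega), zero_mul]

lemma Phi_comp {τ x y : ℂ} (q : ℤ × ℤ × ℕ) :
    Phi τ x y (iotaL ⌊al τ y⌋ q)
      = GT τ (e y) (y + (τ + 1) / 2) ((τ + 1) / 2 - x) y q := by
  obtain ⟨m, n, j⟩ := q
  rcases le_or_gt n ⌊al τ y⌋ with h | h
  · have hi : iotaL ⌊al τ y⌋ (m, n, j) = (m, n, m + 1 + j) := by
      simp [iotaL, if_pos h]
    rw [hi, Phi]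
    dsimp only
    rw [if_pos ⟨h, by omega⟩, one_mul, GT]
    dsimp only
    rw [if_pos h, ← e_add, ← e_add, ← e_add, EE]
    dsimp only
    congr 1
    push_cast
    ring
  · have hi : iotaL ⌊al τ y⌋ (m, n, j) = (m, n, m - j) := by
      simp [iotaL, if_neg (not_le.2 h)]
    rw [hi, Phi]
    dsimp only
    rw [if_neg (by omega), if_pos ⟨h, by omega⟩, GT]
    dsimp only
    rw [if_neg (not_le.2 h), mul_neg, mul_neg, neg_one_mul, neg_inj,
      ← e_add, ← e_add, ← e_add, EE]
    dsimp only
    congr 1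
    push_cast
    ring

lemma Psi_comp {τ x y : ℂ} (q : ℤ × ℤ × ℕ) :
    Psi τ x y (iotaR ⌊al τ (-x)⌋ q)
      = GT τ (e (-x)) (x - (τ + 1) / 2) (y + (τ + 1) / 2) (-x) q := by
  obtain ⟨m, n, j⟩ := q
  rcases le_or_gt n ⌊al τ (-x)⌋ with h | h
  · have hi : iotaR ⌊al τ (-x)⌋ (m, n, j) = ((n:ℤ) - j - 1, (j:ℤ) + 1 - m, n) := by
      simp [iotaR, if_pos h]
    rw [hi, Psi]
    dsimp only
    rw [if_pos ⟨h, by omega⟩, one_mul, GT]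
    dsimp only
    rw [if_pos h, ← e_add, ← e_add, ← e_add, EE]
    dsimp only
    congr 1
    push_cast
    ring
  · have hi : iotaR ⌊al τ (-x)⌋ (m, n, j) = ((n:ℤ) + j, -(m:ℤ) - j, n) := by
      simp [iotaR, if_neg (not_le.2 h)]
    rw [hi, Psi]
    dsimp only
    rw [if_neg (by omega), if_pos ⟨h, by omega⟩, GT]
    dsimp only
    rw [if_neg (not_le.2 h), mul_neg, mul_neg, neg_one_mul, neg_inj,
      ← e_add, ← e_add, ← e_add, EE]
    dsimp only
    congr 1
    push_cast
    ring

lemma fiber_zero {τ x y : ℂ} (hτ : 0 < τ.im) (n k : ℤ) :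
    ∑' m : ℤ, (Phi τ x y (m, n, k) - Psi τ x y (m, n, k)) = 0 := by
  have hterm : ∀ m : ℤ, Phi τ x y (m, n, k) - Psi τ x y (m, n, k)
      = ((if n ≤ ⌊al τ y⌋ then 1 else 0) - (if k ≤ ⌊al τ (-x)⌋ then 1 else 0))
        * e (EE τ x y (m, n, k)) := by
    intro m
    rw [Phi, Psi]
    dsimp only
    split_ifs <;> first | ring1 | (exfalso; omega)
  rw [tsum_congr hterm, tsum_mul_left]
  have hterm2 : ∀ m : ℤ, e (EE τ x y (m, n, k))
      = e ((k:ℂ) * y - (n:ℂ) * x - (k:ℂ) * (n:ℂ) * τ)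
        * e (τ * ((m + n : ℤ):ℂ) ^ 2 / 2 + ((m + n : ℤ):ℂ) * ((τ + 1) / 2)) := by
    intro m
    rw [← e_add, EE]
    dsimp only
    congr 1
    push_cast
    ring
  rw [tsum_congr hterm2, tsum_mul_left]
  have hshift : ∑' m : ℤ, e (τ * ((m + n : ℤ):ℂ) ^ 2 / 2 + ((m + n : ℤ):ℂ) * ((τ + 1) / 2))
      = theta ((τ + 1) / 2) τ := by
    rw [theta]
    exact (Equiv.addRight n).tsum_eq
      (fun m : ℤ => e (τ * (m:ℂ) ^ 2 / 2 + (m:ℂ) * ((τ + 1) / 2)))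
  rw [hshift, theta_half_zero hτ, mul_zero, mul_zero]

theorem stmt18 (τ : ℂ) (hτ : 0 < τ.im) (x y : ℂ)
    (hx : notInt (al τ x)) (hy : notInt (al τ y)) :
    e y * theta (y + (τ + 1) / 2) τ * kappa y ((τ + 1) / 2 - x) τ =
      e (-x) * theta (x - (τ + 1) / 2) τ * kappa (-x) (y + (τ + 1) / 2) τ := by
  have hx' : notInt (al τ (-x)) := by
    intro k hk
    apply hx (-k)
    have hal : al τ (-x) = -al τ x := by simp [al, neg_div]
    rw [hal] at hk
    push_cast
    linarith
  rw [GT_tsum hτ hy (e y) (y + (τ + 1) / 2) ((τ + 1) / 2 - x),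
    GT_tsum hτ hx' (e (-x)) (x - (τ + 1) / 2) (y + (τ + 1) / 2)]
  have hsuppL : Function.support (Phi τ x y) ⊆ Set.range (iotaL ⌊al τ y⌋) := by
    intro p hp
    by_contra hmem
    exact hp (Phi_off_range p hmem)
  have hsuppR : Function.support (Psi τ x y) ⊆ Set.range (iotaR ⌊al τ (-x)⌋) := by
    intro p hp
    by_contra hmem
    exact hp (Psi_off_range p hmem)
  have heqL : ∑' q : ℤ × ℤ × ℕ, GT τ (e y) (y + (τ + 1) / 2) ((τ + 1) / 2 - x) y q
      = ∑' p : ℤ × ℤ × ℤ, Phi τ x y p := by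
    rw [← (iotaL_inj ⌊al τ y⌋).tsum_eq hsuppL]
    exact tsum_congr fun q => (Phi_comp q).symm
  have heqR : ∑' q : ℤ × ℤ × ℕ, GT τ (e (-x)) (x - (τ + 1) / 2) (y + (τ + 1) / 2) (-x) q
      = ∑' p : ℤ × ℤ × ℤ, Psi τ x y p := by
    rw [← (iotaR_inj ⌊al τ (-x)⌋).tsum_eq hsuppR]
    exact tsum_congr fun q => (Psi_comp q).symm
  rw [heqL, heqR]
  have hsumPhi : Summable (Phi τ x y) := by
    refine ((iotaL_inj ⌊al τ y⌋).summable_iff fun p hmem => Phi_off_range p hmem).1 ?_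
    exact ((summable_GT_norm hτ hy (e y) (y + (τ + 1) / 2) ((τ + 1) / 2 - x)).of_norm).congr
      fun q => (Phi_comp q).symm
  have hsumPsi : Summable (Psi τ x y) := by
    refine ((iotaR_inj ⌊al τ (-x)⌋).summable_iff fun p hmem => Psi_off_range p hmem).1 ?_
    exact ((summable_GT_norm hτ hx' (e (-x)) (x - (τ + 1) / 2) (y + (τ + 1) / 2)).of_norm).congr
      fun q => (Psi_comp q).symm
  have key : ∑' p : ℤ × ℤ × ℤ, (Phi τ x y p - Psi τ x y p) = 0 := by
    have hD : Summable (fun p : ℤ × ℤ × ℤ => Phi τ x y p - Psi τ x y p) :=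
      hsumPhi.sub hsumPsi
    let σ : (ℤ × ℤ) × ℤ ≃ ℤ × ℤ × ℤ :=
      ⟨fun r => (r.2, r.1.1, r.1.2), fun p => ((p.2.1, p.2.2), p.1),
        fun r => rfl, fun p => rfl⟩
    rw [← σ.tsum_eq (fun p : ℤ × ℤ × ℤ => Phi τ x y p - Psi τ x y p)]
    have hD' : Summable (fun r : (ℤ × ℤ) × ℤ =>
        Phi τ x y (σ r) - Psi τ x y (σ r)) := (σ.summable_iff).2 hD
    rw [Summable.tsum_prod hD']
    have hinner : ∀ b : ℤ × ℤ, ∑' c : ℤ,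
        (Phi τ x y (σ (b, c)) - Psi τ x y (σ (b, c))) = 0 := by
      intro b
      exact fiber_zero hτ b.1 b.2
    rw [tsum_congr hinner]
    exact tsum_zero
  have hsub := Summable.tsum_sub hsumPhi hsumPsi
  rw [key] at hsub
  exact sub_eq_zero.mp hsub.symm
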